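/- Discrete supersolutions cannot be touched from below by the comparison polynomials. Fix 0 < λ_min ≤ λ_max and let Λ > 0 satisfy (Λ/n − 1)λ_min > (n−1)λ_max. Let ε > 0, let λ_i : εℤⁿ → ℝ satisfy λ_min ≤ λ_i(x) ≤ λ_max, let u : B₁ ∩ εℤⁿ → ℝ, and let x₀ ∈ B₁ ∩ εℤⁿ be a lattice point with x₀ ± εe_i ∈ B₁ for all i and Lu(x₀) ≤ 0. Then for every a > 0, every unit vector ξ ∈ ℝⁿ and every b ∈ ℝⁿ, the polynomial P(x) = a[(Λ/2)((x−x₀)·ξ)² − (1/2)|x−x₀|² + b·(x−x₀)] + u(x₀) cannot satisfy P(x) ≤ u(x) at all 2n points x = x₀ ± εe_i, i = 1,…,n. (Equivalently, no such P touches u from below at x₀ on the lattice neighborhood {x₀ ± εe_i}.) -/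

import Mathlib

open Metric

noncomputable section

abbrev En (n : ℕ) := EuclideanSpace ℝ (Fin n)

/-- `x` belongs to the lattice `εℤⁿ`. -/
def IsLatticePoint {n : ℕ} (ε : ℝ) (x : En n) : Prop := ∀ i, ∃ m : ℤ, x i = ε * m

/-- The discrete elliptic operator
`Lu(x) = Σᵢ λᵢ(x)[u(x+εeᵢ)+u(x−εeᵢ)−2u(x)]/ε²`. -/
def discreteL {n : ℕ} (ε : ℝ) (lam : Fin n → En n → ℝ) (u : En n → ℝ) (x : En n) : ℝ :=
  ∑ i, lam i x *
    (u (x + EuclideanSpace.single i ε) + u (x - EuclideanSpace.single i ε) - 2 * u x) / ε ^ 2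

/-- The comparison polynomial
`P(x) = a[(Λ/2)((x−x₀)·ξ)² − (1/2)|x−x₀|² + b·(x−x₀)] + v`. -/
def touchPoly {n : ℕ} (Λ a : ℝ) (ξ b x₀ : En n) (v : ℝ) (x : En n) : ℝ :=
  a * (Λ / 2 * ((inner ℝ (x - x₀) ξ : ℝ)) ^ 2 - 1 / 2 * ‖x - x₀‖ ^ 2
      + (inner ℝ b (x - x₀) : ℝ)) + v

/-! If `P ≤ u` at the `2n` neighbours and `P(x₀) = u(x₀)`, every second difference of `u` at `x₀`
dominates that of `P`, which in direction `eᵢ` is `aε²(Λξᵢ² − 1)`. As `|ξ| = 1`, some `ξᵢ² ≥ 1/n`;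
that term contributes at least `λ_min(Λ/n − 1)` and each of the others at least `−λ_max`, so
`Lu(x₀) ≥ a[λ_min(Λ/n − 1) − (n − 1)λ_max] > 0`. -/

open Finset

section TouchPoly

variable {n : ℕ} (Λ a : ℝ) (ξ b x₀ : En n) (v : ℝ)

theorem touchPoly_add_add_sub (h : En n) :
    touchPoly Λ a ξ b x₀ v (x₀ + h) + touchPoly Λ a ξ b x₀ v (x₀ - h) - 2 * v =
      a * (Λ * inner ℝ h ξ ^ 2 - ‖h‖ ^ 2) := by
  simp only [touchPoly, add_sub_cancel_left, sub_sub_cancel_left, inner_neg_left, inner_neg_right,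
    norm_neg]
  ring

theorem touchPoly_add_add_sub_single (i : Fin n) (ε : ℝ) :
    touchPoly Λ a ξ b x₀ v (x₀ + EuclideanSpace.single i ε) +
        touchPoly Λ a ξ b x₀ v (x₀ - EuclideanSpace.single i ε) - 2 * v =
      a * ε ^ 2 * (Λ * ξ i ^ 2 - 1) := by
  rw [touchPoly_add_add_sub, EuclideanSpace.inner_single_left, PiLp.norm_single,
    Real.norm_eq_abs, sq_abs]
  simp only [RCLike.conj_to_real]
  ring

end TouchPoly

theorem le_discreteL_of_touchPoly_le {n : ℕ} {ε : ℝ} (hε : ε ≠ 0) {lam : Fin n → En n → ℝ}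
    {u : En n → ℝ} {x₀ : En n} (hlam : ∀ i, 0 ≤ lam i x₀) {Λ a : ℝ} {ξ b : En n}
    (htouch : ∀ i,
      touchPoly Λ a ξ b x₀ (u x₀) (x₀ + EuclideanSpace.single i ε)
          ≤ u (x₀ + EuclideanSpace.single i ε) ∧
        touchPoly Λ a ξ b x₀ (u x₀) (x₀ - EuclideanSpace.single i ε)
          ≤ u (x₀ - EuclideanSpace.single i ε)) :
    a * ∑ i, lam i x₀ * (Λ * ξ i ^ 2 - 1) ≤ discreteL ε lam u x₀ := by
  rw [discreteL, mul_sum]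
  refine sum_le_sum fun i _ => ?_
  have hdiff := touchPoly_add_add_sub_single Λ a ξ b x₀ (u x₀) i ε
  rw [le_div_iff₀ (by positivity)]
  calc a * (lam i x₀ * (Λ * ξ i ^ 2 - 1)) * ε ^ 2
      = lam i x₀ * (a * ε ^ 2 * (Λ * ξ i ^ 2 - 1)) := by ring
    _ ≤ _ := mul_le_mul_of_nonneg_left (by linarith [htouch i]) (hlam i)

theorem EuclideanSpace.exists_norm_sq_div_card_le_sq_apply {ι : Type*} [Fintype ι] [Nonempty ι]
    (ξ : EuclideanSpace ℝ ι) : ∃ i, ‖ξ‖ ^ 2 / Fintype.card ι ≤ ξ i ^ 2 := by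
  have hsum : ∑ _i : ι, ‖ξ‖ ^ 2 / Fintype.card ι ≤ ∑ i, ξ i ^ 2 := by
    rw [sum_const, card_univ, nsmul_eq_mul, mul_div_cancel₀ _ (by simp),
      EuclideanSpace.norm_sq_eq]
    simp only [Real.norm_eq_abs, sq_abs, le_refl]
  obtain ⟨i, -, hi⟩ := exists_le_of_sum_le univ_nonempty hsum
  exact ⟨i, hi⟩

theorem mul_sub_mul_le_sum_mul {ι : Type*} [Fintype ι] {w c : ι → ℝ} {m M C : ℝ} (hm : 0 ≤ m)
    (hw : ∀ i, m ≤ w i ∧ w i ≤ M) (hc : ∀ i, -1 ≤ c i) {i₀ : ι} (hC : 0 ≤ C) (hi₀ : C ≤ c i₀) :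
    m * C - (Fintype.card ι - 1) * M ≤ ∑ i, w i * c i := by
  classical
  have hw₀ i : 0 ≤ w i := hm.trans (hw i).1
  have hlarge : m * C ≤ w i₀ * c i₀ :=
    mul_le_mul (hw i₀).1 hi₀ hC (hw₀ i₀)
  have hrest : -((Fintype.card ι - 1) * M) ≤ ∑ i ∈ univ.erase i₀, w i * c i := by
    have hcard : ((univ.erase i₀).card : ℝ) = Fintype.card ι - 1 := by
      rw [card_erase_of_mem (mem_univ i₀), card_univ,
        Nat.cast_pred (Fintype.card_pos_iff.mpr ⟨i₀⟩)]
    rw [← hcard, ← mul_neg, ← nsmul_eq_mul, ← sum_const]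
    refine sum_le_sum fun i _ => ?_
    nlinarith [hw i, hc i, hw₀ i]
  rw [← add_sum_erase _ _ (mem_univ i₀)]
  linarith

/-- **Discrete supersolutions cannot be touched from below by the comparison polynomials.** -/
theorem discrete_no_touching (n : ℕ) (hn : 1 ≤ n) (lmin lmax Λ : ℝ)
    (hmin : 0 < lmin) (hminmax : lmin ≤ lmax)
    (hΛ : ((n : ℝ) - 1) * lmax < (Λ / n - 1) * lmin) :
    ∀ ε : ℝ, 0 < ε →
    ∀ lam : Fin n → En n → ℝ, (∀ i x, lmin ≤ lam i x ∧ lam i x ≤ lmax) →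
    ∀ (u : En n → ℝ) (x₀ : En n),
      IsLatticePoint ε x₀ → x₀ ∈ ball (0 : En n) 1 →
      (∀ i, x₀ + EuclideanSpace.single i ε ∈ ball (0 : En n) 1 ∧
            x₀ - EuclideanSpace.single i ε ∈ ball (0 : En n) 1) →
      discreteL ε lam u x₀ ≤ 0 →
      ∀ a : ℝ, 0 < a → ∀ ξ b : En n, ‖ξ‖ = 1 →
        ¬ (∀ i,
            touchPoly Λ a ξ b x₀ (u x₀) (x₀ + EuclideanSpace.single i ε)
              ≤ u (x₀ + EuclideanSpace.single i ε) ∧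
            touchPoly Λ a ξ b x₀ (u x₀) (x₀ - EuclideanSpace.single i ε)
              ≤ u (x₀ - EuclideanSpace.single i ε)) := by
  intro ε hε lam hlam u x₀ _ _ _ hL a ha ξ b hξ htouch
  have : Nonempty (Fin n) := Fin.pos_iff_nonempty.mp hn
  have hn₀ : (0 : ℝ) < n := by exact_mod_cast hn
  have hC : 0 < Λ / n - 1 := by
    have : (0 : ℝ) ≤ (n - 1) * lmax := mul_nonneg (by simpa using hn) (hmin.le.trans hminmax)
    exact pos_of_mul_pos_left (this.trans_lt hΛ) hmin.le
  have hΛ₀ : 0 ≤ Λ := ((div_pos_iff_of_pos_right hn₀).mp (by linarith)).le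
  obtain ⟨i₀, hi₀⟩ := EuclideanSpace.exists_norm_sq_div_card_le_sq_apply ξ
  rw [hξ, one_pow, Fintype.card_fin] at hi₀
  have hlarge : Λ / n - 1 ≤ Λ * ξ i₀ ^ 2 - 1 := by
    rw [div_eq_mul_one_div Λ]
    gcongr
  have hsum : lmin * (Λ / n - 1) - (n - 1) * lmax ≤ ∑ i, lam i x₀ * (Λ * ξ i ^ 2 - 1) := by
    simpa using mul_sub_mul_le_sum_mul hmin.le (hlam · x₀)
      (fun i => by nlinarith [sq_nonneg (ξ i)]) hC.le hlarge
  have hpos := mul_pos ha (by linarith : 0 < ∑ i, lam i x₀ * (Λ * ξ i ^ 2 - 1))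
  have := le_discreteL_of_touchPoly_le hε.ne' (fun i => hmin.le.trans (hlam i x₀).1) htouch
  linarith
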